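/- arXiv:2411.19907 — 4 statements merged into one kernel-verified Lean document; each statement's English description precedes it below -/
import Mathlib

section
/- Let 𝐆 be the smallest collection of sets containing ℕ, closed under function spaces (if F, G ∈ 𝐆 then the set of total functions F → G is in 𝐆), and closed under countable dependent products (if Fₙ ∈ 𝐆 for all n ∈ ℕ, then ∏_{n∈ℕ} Fₙ ∈ 𝐆). Then 𝐆 is sparse: for all F, G ∈ 𝐆, if F ∩ G is inhabited then F = G. -/
/-!
Every member of `𝐆` is inhabited, so an element of a function space `A → B` in `𝐆` is a nonempty
set of ordered pairs; it never lies in `ω`, since every positive numeral contains `∅`, which is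
not a pair. A common element `z` of two function spaces determines their common domain, and any
value of `z` is a common element of the codomains, so induction applies to the codomains.
A common element of two dependent products likewise meets every pair of factors, and a product
meeting a function space `A → B` forces `A = ω`, where `∏_{n∈ℕ} B = ω → B`.
-/

/-- The von Neumann numeral of `n`. -/
def natEmbed : ℕ → ZFSet
  | 0 => ∅
  | n + 1 => insert (natEmbed n) (natEmbed n)

/-- Finite types: the ground type `o` and arrow types `(σ)τ`. -/
inductive FType : Type
  | o : FType
  | arrow : FType → FType → FType

/-- The set-theoretic extension of a finite type: `F_o = ω` and
`F_{(σ)τ}` is the set of all total (set) functions from `F_σ` to `F_τ`. -/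
def Fext : FType → ZFSet
  | .o => ZFSet.omega
  | .arrow σ τ => ZFSet.funs (Fext σ) (Fext τ)

/-- The dependent product `∏_{n∈ℕ} Fₙ`: the set of functions `f` with domain `ω`
such that `f(n) ∈ Fₙ` for all `n`. -/
noncomputable def depProd (F : ℕ → ZFSet) : ZFSet :=
  ZFSet.sep
    (fun f => ∀ (n : ℕ) (y : ZFSet), ZFSet.pair (natEmbed n) y ∈ f → y ∈ F n)
    (ZFSet.funs ZFSet.omega (ZFSet.sUnion (ZFSet.range F)))

/-- `𝐆`: the smallest collection of sets containing `ω`, closed under function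
spaces and under countable dependent products. -/
inductive InG : ZFSet → Prop
  | omega : InG ZFSet.omega
  | funs {F G : ZFSet} : InG F → InG G → InG (ZFSet.funs F G)
  | prod (F : ℕ → ZFSet) : (∀ n, InG (F n)) → InG (depProd F)

namespace ZFSet

variable {A B A' B' f x y : ZFSet}

theorem pair_nonempty (a b : ZFSet) : (pair a b).Nonempty :=
  insert_nonempty _ _

theorem IsFunc.mem_of_pair_mem (hf : IsFunc A B f) (h : pair x y ∈ f) : x ∈ A ∧ y ∈ B :=
  pair_mem_prod.1 (hf.1 h)

theorem IsFunc.exists_pair_mem (hf : IsFunc A B f) (hx : x ∈ A) : ∃ y, pair x y ∈ f :=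
  (hf.2 x hx).exists

theorem IsFunc.nonempty_of_mem (hf : IsFunc A B f) (hx : x ∈ A) : f.Nonempty :=
  let ⟨_, hy⟩ := hf.exists_pair_mem hx
  ZFSet.nonempty_of_mem hy

theorem IsFunc.empty_notMem (hf : IsFunc A B f) : ∅ ∉ f := fun h => by
  obtain ⟨a, -, b, -, hab⟩ := mem_prod.1 (hf.1 h)
  exact not_nonempty_empty (hab ▸ pair_nonempty a b)

theorem IsFunc.dom_eq (hf : IsFunc A B f) (hf' : IsFunc A' B' f) : A = A' := by
  ext x
  constructor
  · intro hx
    obtain ⟨y, hy⟩ := hf.exists_pair_mem hx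
    exact (hf'.mem_of_pair_mem hy).1
  · intro hx
    obtain ⟨y, hy⟩ := hf'.exists_pair_mem hx
    exact (hf.mem_of_pair_mem hy).1

theorem IsFunc.exists_mem_codom_of_nonempty (hf : IsFunc A B f) (hf' : IsFunc A' B' f)
    (hA : A.Nonempty) : ∃ y, y ∈ B ∧ y ∈ B' := by
  obtain ⟨x, hx⟩ := hA
  obtain ⟨y, hy⟩ := hf.exists_pair_mem hx
  exact ⟨y, (hf.mem_of_pair_mem hy).2, (hf'.mem_of_pair_mem hy).2⟩

end ZFSet

open ZFSet

theorem natEmbed_eq_mk_ofNat (n : ℕ) : natEmbed n = mk (PSet.ofNat n) := by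
  induction n with
  | zero => rfl
  | succ n ih => rw [natEmbed, ih]; rfl

theorem mem_omega_iff {x : ZFSet} : x ∈ omega ↔ ∃ n, x = natEmbed n := by
  induction x using Quotient.inductionOn with
  | h x =>
    simp only [natEmbed_eq_mk_ofNat]
    constructor
    · rintro ⟨⟨n⟩, h⟩
      exact ⟨n, ZFSet.sound h⟩
    · rintro ⟨n, h⟩
      exact ⟨⟨n⟩, ZFSet.exact h⟩

theorem natEmbed_mem_omega (n : ℕ) : natEmbed n ∈ omega :=
  mem_omega_iff.2 ⟨n, rfl⟩

theorem natEmbed_mem_natEmbed {m n : ℕ} (h : m < n) : natEmbed m ∈ natEmbed n := by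
  induction n with
  | zero => omega
  | succ n ih =>
    rcases Nat.lt_succ_iff_lt_or_eq.1 h with h | rfl
    · exact mem_insert_of_mem _ (ih h)
    · exact mem_insert _ _

theorem natEmbed_injective : Function.Injective natEmbed := by
  intro m n h
  by_contra hne
  rcases Nat.lt_or_gt_of_ne hne with hlt | hlt <;>
    exact mem_irrefl _ (h ▸ natEmbed_mem_natEmbed hlt)

theorem empty_mem_of_mem_omega {z : ZFSet} (hz : z ∈ omega) (hne : z.Nonempty) : ∅ ∈ z := by
  obtain ⟨n, rfl⟩ := mem_omega_iff.1 hz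
  cases n with
  | zero => exact absurd hne not_nonempty_empty
  | succ n => exact natEmbed_mem_natEmbed n.succ_pos

theorem not_isFunc_of_mem_omega {A B z : ZFSet} (hz : z ∈ omega) (hA : A.Nonempty) :
    ¬ IsFunc A B z := fun hf =>
  let ⟨_, hx⟩ := hA
  hf.empty_notMem (empty_mem_of_mem_omega hz (hf.nonempty_of_mem hx))

theorem mem_depProd {H : ℕ → ZFSet} {f : ZFSet} :
    f ∈ depProd H ↔ IsFunc omega (⋃₀ range H) f ∧ ∀ n y, pair (natEmbed n) y ∈ f → y ∈ H n := by
  rw [depProd, mem_sep, mem_funs]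

theorem depProd_const (B : ZFSet) : depProd (fun _ => B) = funs omega B := by
  have hB : ⋃₀ range (fun _ : ℕ => B) = B := by
    rw [show range (fun _ : ℕ => B) = {B} by ext; simp [eq_comm], sUnion_singleton]
  ext f
  rw [mem_depProd, mem_funs, hB]
  exact ⟨And.left, fun hf => ⟨hf, fun _ _ hy => (hf.mem_of_pair_mem hy).2⟩⟩

theorem depProd_nonempty {H : ℕ → ZFSet} (hH : ∀ n, (H n).Nonempty) : (depProd H).Nonempty := by
  choose g hg using hH
  let value : ZFSet → ZFSet := fun x => g (Function.invFun natEmbed x)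
  have value_natEmbed (n : ℕ) : value (natEmbed n) = g n :=
    congrArg g (Function.leftInverse_invFun natEmbed_injective n)
  let _ : Definable₁ value := Classical.allZFSetDefinable _
  refine ⟨map value omega, mem_depProd.2 ⟨map_isFunc.2 fun x hx => ?_, fun n y hy => ?_⟩⟩
  · obtain ⟨n, rfl⟩ := mem_omega_iff.1 hx
    exact mem_sUnion_of_mem (value_natEmbed n ▸ hg n) (mem_range_self n)
  · obtain ⟨x, -, hxy⟩ := mem_map.1 hy
    obtain ⟨rfl, rfl⟩ := pair_injective hxy
    exact value_natEmbed n ▸ hg n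

theorem depProd_eq_of_mem {H H' : ℕ → ZFSet} {z : ZFSet} (hz : z ∈ depProd H)
    (hz' : z ∈ depProd H') (hH : ∀ n y, y ∈ H n → y ∈ H' n → H n = H' n) :
    depProd H = depProd H' := by
  refine congrArg depProd (funext fun n => ?_)
  obtain ⟨hf, hzH⟩ := mem_depProd.1 hz
  obtain ⟨y, hy⟩ := hf.exists_pair_mem (natEmbed_mem_omega n)
  exact hH n y (hzH n y hy) ((mem_depProd.1 hz').2 n y hy)

theorem funs_eq_depProd_const_of_mem {A B z : ZFSet} {H : ℕ → ZFSet} (hz : z ∈ funs A B)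
    (hz' : z ∈ depProd H) : funs A B = depProd (fun _ => B) := by
  rw [depProd_const, (mem_funs.1 hz).dom_eq (mem_depProd.1 hz').1]

theorem InG.nonempty {F : ZFSet} (hF : InG F) : F.Nonempty := by
  induction hF with
  | omega => exact ⟨∅, omega_zero⟩
  | funs _ _ _ ihB =>
    obtain ⟨b, hb⟩ := ihB
    let _ : Definable₁ fun _ => b := Classical.allZFSetDefinable _
    exact ⟨map (fun _ => b) _, mem_funs.2 (map_isFunc.2 fun _ _ => hb)⟩
  | prod H _ ih => exact depProd_nonempty ih

theorem InG.eq_omega_of_mem {G z : ZFSet} (hG : InG G) (hz : z ∈ ZFSet.omega) (hzG : z ∈ G) :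
    G = ZFSet.omega := by
  cases hG with
  | omega => rfl
  | funs hA _ => exact absurd (mem_funs.1 hzG) (not_isFunc_of_mem_omega hz hA.nonempty)
  | prod H _ => exact absurd (mem_depProd.1 hzG).1 (not_isFunc_of_mem_omega hz ⟨_, omega_zero⟩)

/-- `𝐆` is sparse: members of `𝐆` with inhabited intersection are equal. -/
theorem InG_sparse (F G : ZFSet) (hF : InG F) (hG : InG G)
    (h : ∃ z : ZFSet, z ∈ F ∧ z ∈ G) : F = G := by
  obtain ⟨z, hzF, hzG⟩ := h
  induction hF generalizing G z with
  | omega => exact (hG.eq_omega_of_mem hzF hzG).symm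
  | funs hA hB _ ihB =>
    cases hG with
    | omega => exact (InG.funs hA hB).eq_omega_of_mem hzG hzF
    | funs _ hB' =>
      have hf := mem_funs.1 hzF
      have hf' := mem_funs.1 hzG
      obtain ⟨y, hyB, hyB'⟩ := hf.exists_mem_codom_of_nonempty hf' hA.nonempty
      rw [hf.dom_eq hf', ihB _ hB' y hyB hyB']
    | prod H hH =>
      have hconst := funs_eq_depProd_const_of_mem hzF hzG
      rw [hconst] at hzF ⊢
      exact depProd_eq_of_mem hzF hzG fun n => ihB _ (hH n)
  | prod H hH ih =>
    cases hG with
    | omega => exact (InG.prod H hH).eq_omega_of_mem hzG hzF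
    | funs _ hB' =>
      have hconst := funs_eq_depProd_const_of_mem hzG hzF
      rw [hconst] at hzG ⊢
      exact depProd_eq_of_mem hzF hzG fun n => ih n _ hB'
    | prod H' hH' => exact depProd_eq_of_mem hzF hzG fun n => ih n _ (hH' n)
end

section
/- Define a partial application on the collection A* of inhabited subsets of 𝔾 × Ar (where application of a set a to a set b collects all results of applying elements of a to finite tuples of elements of b according to their arities). Let k be the set of all pairs (k_{FG}, p → q → p) where F, G ∈ 𝐆, p, q are arities, and k_{FG} : F → G → F is the curried first-projection function. Then for all inhabited a, b in the algebra, k·a·b = a. -/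
/-- Arities: `o`; `p₀⋯pₙ → q` (at least one argument); countable products
`∏_{n∈ℕ} pₙ`. -/
inductive Arity : Type
  | o : Arity
  | arr : Arity → List Arity → Arity → Arity   -- `arr p ps q` is `p ps… → q`
  | prod : (ℕ → Arity) → Arity

/-- Iterated set-theoretic function application `x y₀ ⋯ yₖ = z` (as a relation
via Kuratowski pairs). -/
def zAppList : ZFSet → List ZFSet → ZFSet → Prop
  | x, [], z => x = z
  | x, y :: ys, z => ∃ w : ZFSet, ZFSet.pair y w ∈ x ∧ zAppList w ys z

/-- Application of an arity-tagged element of `𝔾 × Ar` to a tuple: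
`(x, p₀⋯pₙ→q)((y₀,p₀),…,(yₙ,pₙ)) ≃ (x y₀⋯yₙ, q)`, and
`(x, ∏ₘ pₘ)((m,o)) ≃ (x(m), pₘ)`. -/
def appTuple : ZFSet × Arity → List (ZFSet × Arity) → ZFSet × Arity → Prop
  | (x, .arr p ps q), ys, (z, q') =>
      q' = q ∧ ys.map Prod.snd = p :: ps ∧ zAppList x (ys.map Prod.fst) z
  | (x, .prod pm), ys, (z, q) =>
      ∃ m : ℕ, ys = [(natEmbed m, .o)] ∧ q = pm m ∧ ZFSet.pair (natEmbed m) z ∈ x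
  | (_, .o), _, _ => False

/-- The collecting application on subsets of `𝔾 × Ar`: `a·b` collects all
results of applying elements of `a` to tuples of elements of `b`; it is
defined iff the resulting set is inhabited. -/
def coll (a b : Set (ZFSet × Arity)) : Set (ZFSet × Arity) :=
  { z | ∃ x ∈ a, ∃ ys : List (ZFSet × Arity), (∀ y ∈ ys, y ∈ b) ∧ appTuple x ys z }

/-- The carrier `𝔾 × Ar` (first components in `⋃𝐆`). -/
def Gr : Set (ZFSet × Arity) := { w | ∃ G : ZFSet, InG G ∧ w.1 ∈ G }

/-- The inner part `{(y, x) | y ∈ G}` of the curried constant function. -/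
noncomputable def kInner (G x : ZFSet) : ZFSet :=
  ZFSet.sep (fun q => ∃ y ∈ G, q = ZFSet.pair y x)
    (ZFSet.powerset (ZFSet.powerset (G ∪ {x})))

/-- The curried first projection `k_{FG} : F → G → F`, `k_{FG} x y = x`. -/
noncomputable def kFun (F G : ZFSet) : ZFSet :=
  ZFSet.sep (fun w => ∃ x ∈ F, w = ZFSet.pair x (kInner G x))
    (ZFSet.powerset (ZFSet.powerset
      (F ∪ ZFSet.powerset (ZFSet.powerset (ZFSet.powerset (F ∪ G))))))

/-- The `k` combinator of the algebra on inhabited subsets of `𝔾 × Ar`. -/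
def Kset : Set (ZFSet × Arity) :=
  { w | ∃ F G : ZFSet, InG F ∧ InG G ∧ ∃ p q : Arity,
      w = (kFun F G, .arr p [] (.arr q [] p)) }

open ZFSet

lemma ZFSet.pair_mem_powerset_powerset {x a b : ZFSet} (ha : a ∈ x) (hb : b ∈ x) :
    pair a b ∈ powerset (powerset x) := by
  simp only [pair, mem_powerset, subset_def, mem_pair]
  rintro _ (rfl | rfl) _ h <;> simp only [mem_singleton, mem_pair] at h <;> aesop

lemma mem_kInner_iff {G x z : ZFSet} : z ∈ kInner G x ↔ ∃ y ∈ G, z = pair y x :=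
  mem_sep.trans ⟨And.right, fun ⟨y, hy, hz⟩ => ⟨hz ▸ pair_mem_powerset_powerset
    (mem_union.2 (Or.inl hy)) (mem_union.2 (Or.inr (mem_singleton.2 rfl))), y, hy, hz⟩⟩

lemma kInner_mem_powerset_powerset_powerset {F G x : ZFSet} (hx : x ∈ F) :
    kInner G x ∈ powerset (powerset (powerset (F ∪ G))) := by
  refine mem_powerset.2 fun z hz => ?_
  obtain ⟨y, hy, rfl⟩ := mem_kInner_iff.1 hz
  exact pair_mem_powerset_powerset (mem_union.2 (Or.inr hy)) (mem_union.2 (Or.inl hx))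

lemma mem_kFun_iff {F G w : ZFSet} : w ∈ kFun F G ↔ ∃ x ∈ F, w = pair x (kInner G x) :=
  mem_sep.trans ⟨And.right, fun ⟨x, hx, hw⟩ => ⟨hw ▸ pair_mem_powerset_powerset
    (mem_union.2 (Or.inl hx)) (mem_union.2 (Or.inr (kInner_mem_powerset_powerset_powerset hx))),
    x, hx, hw⟩⟩

lemma appTuple_arr_nil_iff {f z : ZFSet} {p q r : Arity} {ys : List (ZFSet × Arity)} :
    appTuple (f, .arr p [] q) ys (z, r) ↔ r = q ∧ ∃ y, ys = [(y, p)] ∧ pair y z ∈ f := by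
  rcases ys with _ | ⟨⟨y, p'⟩, _ | _⟩ <;> simp [appTuple, zAppList]

lemma appTuple_kFun_iff {F G f : ZFSet} {p q r : Arity} {ys : List (ZFSet × Arity)} :
    appTuple (kFun F G, .arr p [] (.arr q [] p)) ys (f, r) ↔
      r = .arr q [] p ∧ ∃ x ∈ F, ys = [(x, p)] ∧ f = kInner G x := by
  simp only [appTuple_arr_nil_iff, mem_kFun_iff, pair_inj]
  aesop

lemma appTuple_kInner_iff {G x z : ZFSet} {p q r : Arity} {ys : List (ZFSet × Arity)} :
    appTuple (kInner G x, .arr q [] p) ys (z, r) ↔ r = p ∧ z = x ∧ ∃ y ∈ G, ys = [(y, q)] := by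
  simp only [appTuple_arr_nil_iff, mem_kInner_iff, pair_inj]
  aesop

lemma mem_coll_of_appTuple_singleton {a b : Set (ZFSet × Arity)} {x y z : ZFSet × Arity}
    (hx : x ∈ a) (hy : y ∈ b) (h : appTuple x [y] z) : z ∈ coll a b :=
  ⟨x, hx, [y], List.forall_mem_singleton.2 hy, h⟩

theorem k_spec_general (a b : Set (ZFSet × Arity)) (hb : b.Nonempty)
    (haG : a ⊆ Gr) (hbG : b ⊆ Gr) :
    coll (coll Kset a) b = a := by
  ext ⟨z, r⟩
  constructor
  · rintro ⟨⟨f, s⟩, ⟨_, ⟨F, G, -, -, p, q, rfl⟩, xs, hxs, hk⟩, ys, -, hf⟩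
    obtain ⟨rfl, x, -, rfl, rfl⟩ := appTuple_kFun_iff.1 hk
    obtain ⟨rfl, rfl, -⟩ := appTuple_kInner_iff.1 hf
    exact hxs _ (List.mem_singleton_self _)
  · intro hz
    obtain ⟨F, hF, hzF⟩ := haG hz
    obtain ⟨⟨y, q⟩, hy⟩ := hb
    obtain ⟨G, hG, hyG⟩ := hbG hy
    have hk : (kInner G z, .arr q [] r) ∈ coll Kset a :=
      mem_coll_of_appTuple_singleton ⟨F, G, hF, hG, r, q, rfl⟩ hz
        (appTuple_kFun_iff.2 ⟨rfl, z, hzF, rfl, rfl⟩)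
    exact mem_coll_of_appTuple_singleton hk hy (appTuple_kInner_iff.2 ⟨rfl, rfl, y, hyG, rfl⟩)

/-- For all inhabited `a, b ⊆ 𝔾 × Ar`, `k·a·b = a`. -/
theorem k_spec (a b : Set (ZFSet × Arity)) (ha : a.Nonempty) (hb : b.Nonempty)
    (haG : a ⊆ Gr) (hbG : b ⊆ Gr) :
    coll (coll Kset a) b = a :=
  k_spec_general a b hb haG hbG
end

section
/- Choice for injective names: if some e ∈ A realizes ∀u∈x ∃v∈y φ(u,v), where x and y are injective names in V_tr(A), then there exists a function f : x° → y° such that φ°(u, f(u)) holds for all u ∈ x°. The function can be taken to be f = {⟨u°, v°⟩ | ⟨a,u⟩ ∈ x* ∧ ⟨b,v⟩ ∈ y* ∧ (e·a)₀ ≃ b}. -/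
/-!
The graph `{⟨u°, v°⟩ | ⟨a,u⟩ ∈ x*, ⟨b,v⟩ ∈ y*, (e·a)₀ ≃ b}` is a function `x° → y°` because
both names are injective: `u°` determines the label `a`, hence the value `(e·a)₀ = b`, and `b`
determines `v°`. It is total since `e` answers every label of `x*` with some label of `y*`, and
along each of its edges `(e·a)₁` realizes `φ(u, v)`, so the truth lemma gives `φ°(u°, v°)`.
-/

/-- Lifting of a partial binary application to `Option`. -/
def oap {A : Type} (app : A → A → Option A) (x y : Option A) : Option A :=
  x.bind fun a => y.bind fun b => app a b

/-- A partial combinatory algebra, together with chosen pairing and projection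
combinators (which exist in any pca). -/
structure PCA (A : Type) where
  app : A → A → Option A
  k : A
  s : A
  pairc : A
  pr0 : A
  pr1 : A
  nontrivial : ∃ a b : A, a ≠ b
  k_def : ∀ a : A, (app k a).isSome
  s_def : ∀ a : A, (app s a).isSome
  s2_def : ∀ a b : A, (oap app (app s a) (some b)).isSome
  k_spec : ∀ a b : A, oap app (app k a) (some b) = some a
  s_spec : ∀ a b c : A, oap app (oap app (app s a) (some b)) (some c)
      = oap app (oap app (some a) (some c)) (oap app (some b) (some c))
  pair_def : ∀ a b : A, (oap app (app pairc a) (some b)).isSome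
  pr0_spec : ∀ a b : A, oap app (some pr0) (oap app (app pairc a) (some b)) = some a
  pr1_spec : ∀ a b : A, oap app (some pr1) (oap app (app pairc a) (some b)) = some b
/-- Names in the realizability structure `V_tr(A)`: a name is a pair
`⟨x, x̂⟩` of a set `x` together with a family (the set `x̂ ⊆ A × V_tr(A)`) of
labelled names. -/
inductive VName (A : Type) : Type 2
  | mk (deg : ZFSet.{0}) (ι : Type 1) (lab : ι → A) (elt : ι → VName A)

/-- The truth component `x°` (first component) of a name. -/
def VName.deg {A : Type} : VName A → ZFSet
  | .mk x _ _ _ => x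

/-- The index type of the second component `x*` of a name. -/
def VName.ι {A : Type} : VName A → Type 1
  | .mk _ i _ _ => i

/-- The labels (realizers) of the second component `x*`. -/
def VName.lab {A : Type} : (v : VName A) → v.ι → A
  | .mk _ _ l _ => l

/-- The members of the second component `x*`. -/
def VName.elt {A : Type} : (v : VName A) → v.ι → VName A
  | .mk _ _ _ e => e

/-- A pair `⟨x, x̂⟩` is a genuine member of `V_tr(A)` when, hereditarily,
`u° ∈ x` for every `⟨a,u⟩ ∈ x̂`. -/
def VName.IsName {A : Type} : VName A → Prop
  | .mk x _ _ e => (∀ i, (e i).deg ∈ x) ∧ ∀ i, (e i).IsName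
/-- A name `x ∈ V_tr(A)` is injective if (i) `x° = {u° | ∃a ⟨a,u⟩ ∈ x*}` and
(ii) for `⟨a,u⟩, ⟨b,v⟩ ∈ x*`, `a = b` iff `u° = v°`. -/
def InjectiveName {A : Type} (v : VName A) : Prop :=
  (∀ z : ZFSet, z ∈ v.deg ↔ ∃ i : v.ι, (v.elt i).deg = z) ∧
  ∀ i j : v.ι, (v.lab i = v.lab j ↔ (v.elt i).deg = (v.elt j).deg)

namespace ZFSet

variable {p : ZFSet → ZFSet → Prop} {x y a b : ZFSet}

theorem pair_mem_pairSep : pair a b ∈ pairSep p x y ↔ a ∈ x ∧ b ∈ y ∧ p a b := by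
  simp only [mem_pairSep, pair_inj]
  constructor
  · rintro ⟨a, ha, b, hb, ⟨rfl, rfl⟩, hab⟩
    exact ⟨ha, hb, hab⟩
  · rintro ⟨ha, hb, hab⟩
    exact ⟨a, ha, b, hb, ⟨rfl, rfl⟩, hab⟩

theorem pairSep_subset_prod : pairSep p x y ⊆ prod x y := by
  intro z hz
  obtain ⟨a, ha, b, hb, rfl, -⟩ := mem_pairSep.1 hz
  exact pair_mem_prod.2 ⟨ha, hb⟩

theorem isFunc_pairSep (htotal : ∀ a ∈ x, ∃ b ∈ y, p a b)
    (hunique : ∀ a b b', p a b → p a b' → b = b') : IsFunc x y (pairSep p x y) := by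
  refine ⟨pairSep_subset_prod, fun a ha => ?_⟩
  obtain ⟨b, hb, hab⟩ := htotal a ha
  exact ⟨b, pair_mem_pairSep.2 ⟨ha, hb, hab⟩,
    fun b' hb' => hunique a b' b (pair_mem_pairSep.1 hb').2.2 hab⟩

end ZFSet

open ZFSet

section

variable {A : Type}

namespace InjectiveName

variable {v : VName A}

theorem deg_elt_mem (hv : InjectiveName v) (i : v.ι) : (v.elt i).deg ∈ v.deg :=
  (hv.1 _).2 ⟨i, rfl⟩

theorem exists_deg_elt_eq (hv : InjectiveName v) {z : ZFSet} (hz : z ∈ v.deg) :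
    ∃ i, (v.elt i).deg = z :=
  (hv.1 z).1 hz

theorem lab_eq_iff (hv : InjectiveName v) (i j : v.ι) :
    v.lab i = v.lab j ↔ (v.elt i).deg = (v.elt j).deg :=
  hv.2 i j

end InjectiveName

/-- The realizability part of `e ⊩ ∀u∈x ∃v∈y φ(u,v)`. -/
def RealizesForallExists (P : PCA A) (realφ : A → VName A → VName A → Prop) (e : A)
    (x y : VName A) : Prop :=
  ∀ i : x.ι, ∃ b : A, P.app e (x.lab i) = some b ∧
    ∃ j : y.ι, P.app P.pr0 b = some (y.lab j) ∧
      ∃ c : A, P.app P.pr1 b = some c ∧ realφ c (x.elt i) (y.elt j)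

/-- `ChoiceGraph P e x y u° v°` says `⟨a,u⟩ ∈ x*`, `⟨b,v⟩ ∈ y*` and `(e·a)₀ ≃ b`. -/
def ChoiceGraph (P : PCA A) (e : A) (x y : VName A) (u w : ZFSet) : Prop :=
  ∃ (i : x.ι) (j : y.ι) (b : A),
    P.app e (x.lab i) = some b ∧ P.app P.pr0 b = some (y.lab j) ∧
    u = (x.elt i).deg ∧ w = (y.elt j).deg

namespace ChoiceGraph

variable {P : PCA A} {e : A} {x y : VName A} {u w : ZFSet}

theorem mem_left (hx : InjectiveName x) (h : ChoiceGraph P e x y u w) : u ∈ x.deg := by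
  obtain ⟨i, -, -, -, -, rfl, -⟩ := h
  exact hx.deg_elt_mem i

theorem mem_right (hy : InjectiveName y) (h : ChoiceGraph P e x y u w) : w ∈ y.deg := by
  obtain ⟨-, j, -, -, -, -, rfl⟩ := h
  exact hy.deg_elt_mem j

theorem right_unique (hx : InjectiveName x) (hy : InjectiveName y) {w' : ZFSet}
    (h : ChoiceGraph P e x y u w) (h' : ChoiceGraph P e x y u w') : w = w' := by
  obtain ⟨i, j, b, hb, hj, rfl, rfl⟩ := h
  obtain ⟨i', j', b', hb', hj', hii', rfl⟩ := h'
  have hlab : x.lab i = x.lab i' := (hx.lab_eq_iff i i').2 hii'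
  obtain rfl : b = b' := Option.some_injective _ (hb.symm.trans (hlab ▸ hb'))
  exact (hy.lab_eq_iff j j').1 (Option.some_injective _ (hj.symm.trans hj'))

theorem exists_of_mem {realφ : A → VName A → VName A → Prop} (hx : InjectiveName x)
    (hy : InjectiveName y) (he : RealizesForallExists P realφ e x y) (hu : u ∈ x.deg) :
    ∃ w ∈ y.deg, ChoiceGraph P e x y u w := by
  obtain ⟨i, rfl⟩ := hx.exists_deg_elt_eq hu
  obtain ⟨b, hb, j, hj, -⟩ := he i
  exact ⟨_, hy.deg_elt_mem j, i, j, b, hb, hj, rfl, rfl⟩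

theorem exists_realizer {realφ : A → VName A → VName A → Prop} (hy : InjectiveName y)
    (he : RealizesForallExists P realφ e x y) (h : ChoiceGraph P e x y u w) :
    ∃ (i : x.ι) (j : y.ι) (c : A), realφ c (x.elt i) (y.elt j) ∧
      u = (x.elt i).deg ∧ w = (y.elt j).deg := by
  obtain ⟨i, j, b, hb, hj, rfl, rfl⟩ := h
  obtain ⟨b', hb', j', hj', c, -, hc⟩ := he i
  obtain rfl : b = b' := Option.some_injective _ (hb.symm.trans hb')
  have hjj' : (y.elt j').deg = (y.elt j).deg :=
    (hy.lab_eq_iff j' j).1 (Option.some_injective _ (hj'.symm.trans hj))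
  exact ⟨i, j', c, hc, rfl, hjj'.symm⟩

end ChoiceGraph

end

/-- Choice for injective names: if `e ⊩ ∀u∈x ∃v∈y φ(u,v)` with `x, y`
injective, then there is a (set-theoretic) function `f : x° → y°` with
`φ°(u, f(u))` for all `u ∈ x°`; the function can be taken to be
`f = {⟨u°,v°⟩ | ⟨a,u⟩ ∈ x* ∧ ⟨b,v⟩ ∈ y* ∧ (e·a)₀ ≃ b}`.  Here `φ` is given by
its realizability relation `realφ` and its truth `truthφ`, subject to the
truth lemma. -/
theorem choice_for_injective_names {A : Type} (P : PCA A)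
    (realφ : A → VName A → VName A → Prop) (truthφ : ZFSet → ZFSet → Prop)
    (truthLemma : ∀ (c : A) (u v : VName A), realφ c u v → truthφ u.deg v.deg)
    (x y : VName A) (hx : InjectiveName x) (hy : InjectiveName y) (e : A)
    (he : (∀ u ∈ x.deg, ∃ v ∈ y.deg, truthφ u v) ∧
      ∀ i : x.ι, ∃ b : A, P.app e (x.lab i) = some b ∧
        ∃ j : y.ι, P.app P.pr0 b = some (y.lab j) ∧
          ∃ c : A, P.app P.pr1 b = some c ∧ realφ c (x.elt i) (y.elt j)) :
    ∃ f : ZFSet, ZFSet.IsFunc x.deg y.deg f ∧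
      (∀ u w : ZFSet, ZFSet.pair u w ∈ f → truthφ u w) ∧
      (∀ u w : ZFSet, ZFSet.pair u w ∈ f ↔
        ∃ (i : x.ι) (j : y.ι) (b : A),
          P.app e (x.lab i) = some b ∧ P.app P.pr0 b = some (y.lab j) ∧
          u = (x.elt i).deg ∧ w = (y.elt j).deg) := by
  refine ⟨pairSep (ChoiceGraph P e x y) x.deg y.deg,
    isFunc_pairSep (fun u hu => ChoiceGraph.exists_of_mem hx hy he.2 hu)
      (fun u w w' => ChoiceGraph.right_unique hx hy), fun u w huw => ?_, fun u w => ?_⟩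
  · obtain ⟨i, j, c, hc, rfl, rfl⟩ := (pair_mem_pairSep.1 huw).2.2.exists_realizer hy he.2
    exact truthLemma c _ _ hc
  · exact pair_mem_pairSep.trans
      ⟨fun h => h.2.2, fun h => ⟨ChoiceGraph.mem_left hx h, ChoiceGraph.mem_right hy h, h⟩⟩
end

section
/- For the pca structure on inhabited subsets of 𝔾 × Ar, the combinator s defined as the union of the set S of all suitably-typed substitution functions together with the padding set C = {(λx y.0, p → q → o) | F,G ∈ 𝐆, p,q ∈ Ar} satisfies: for all inhabited a, b, the application s·a·b is defined (it contains (0, o)). -/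
/-- The inner part `{(y, 0) | y ∈ G}` of the constant-zero function. -/
noncomputable def czInner (G : ZFSet) : ZFSet :=
  ZFSet.sep (fun w => ∃ y ∈ G, w = ZFSet.pair y (natEmbed 0))
    (ZFSet.powerset (ZFSet.powerset (G ∪ {natEmbed 0})))

/-- The constant function `λx^F y^G.0`. -/
noncomputable def czFun (F G : ZFSet) : ZFSet :=
  ZFSet.sep (fun w => ∃ x ∈ F, w = ZFSet.pair x (czInner G))
    (ZFSet.powerset (ZFSet.powerset (F ∪ {czInner G})))

/-- The padding set `C = {(λx^F y^G.0, p → q → o) | F, G ∈ 𝐆, p, q ∈ Ar}`. -/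
noncomputable def Cset : Set (ZFSet × Arity) :=
  { w | ∃ F G : ZFSet, InG F ∧ InG G ∧ ∃ p q : Arity,
      w = (czFun F G, .arr p [] (.arr q [] .o)) }

/-! Whatever `S` is, pick `(x, p) ∈ a` and `(y, q) ∈ b` with `x ∈ F`, `y ∈ G` for some `F, G ∈ 𝐆`:
the padding element `(λx^F y^G.0, p → q → o)` of `C` applies to `(x, p)` and then to `(y, q)`,
giving `(0, o)`. -/

open ZFSet

lemma ZFSet.pair_mem_powerset_powerset_union {x y A B : ZFSet} (hx : x ∈ A) (hy : y ∈ B) :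
    pair x y ∈ powerset (powerset (A ∪ B)) := by
  have hprod := pair_mem_prod.2 ⟨hx, hy⟩
  rw [ZFSet.prod, pairSep] at hprod
  exact (mem_sep.1 hprod).1

lemma pair_mem_czInner {y G : ZFSet} (hy : y ∈ G) : pair y (natEmbed 0) ∈ czInner G :=
  mem_sep.2 ⟨pair_mem_powerset_powerset_union hy (mem_singleton.2 rfl), y, hy, rfl⟩

lemma pair_mem_czFun {x F : ZFSet} (G : ZFSet) (hx : x ∈ F) :
    pair x (czInner G) ∈ czFun F G :=
  mem_sep.2 ⟨pair_mem_powerset_powerset_union hx (mem_singleton.2 rfl), x, hx, rfl⟩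

lemma czFun_mem_Cset {F G : ZFSet} (hF : InG F) (hG : InG G) (p q : Arity) :
    (czFun F G, .arr p [] (.arr q [] .o)) ∈ Cset :=
  ⟨F, G, hF, hG, p, q, rfl⟩

lemma mem_coll_of_pair_mem {A B : Set (ZFSet × Arity)} {x y z : ZFSet} {p q : Arity}
    (hx : (x, .arr p [] q) ∈ A) (hy : (y, p) ∈ B) (hyz : pair y z ∈ x) :
    (z, q) ∈ coll A B :=
  ⟨_, hx, [(y, p)], by simpa using hy, rfl, rfl, z, hyz, rfl⟩

/-- For the `s` combinator `S ∪ C` (for any set `S` of suitably-typed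
substitution functions together with the padding set `C`), the application
`s·a·b` is defined for all inhabited `a, b ⊆ 𝔾 × Ar`: it contains `(0, o)`. -/
theorem s_total (S : Set (ZFSet × Arity)) (a b : Set (ZFSet × Arity))
    (ha : a.Nonempty) (hb : b.Nonempty) (haG : a ⊆ Gr) (hbG : b ⊆ Gr) :
    (natEmbed 0, Arity.o) ∈ coll (coll (S ∪ Cset) a) b ∧
    (coll (coll (S ∪ Cset) a) b).Nonempty := by
  obtain ⟨⟨x, p⟩, hxa⟩ := ha
  obtain ⟨⟨y, q⟩, hyb⟩ := hb
  obtain ⟨F, hF, hxF⟩ := haG hxa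
  obtain ⟨G, hG, hyG⟩ := hbG hyb
  have hzero : (natEmbed 0, Arity.o) ∈ coll (coll (S ∪ Cset) a) b :=
    mem_coll_of_pair_mem
      (mem_coll_of_pair_mem (Or.inr (czFun_mem_Cset hF hG p q)) hxa (pair_mem_czFun G hxF))
      hyb (pair_mem_czInner hyG)
  exact ⟨hzero, _, hzero⟩
end
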